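/- Let h : ℝ → ℝ be continuous on [0, π/4] with h(θ) ≥ 0 for all θ ∈ [0, π/4], and suppose h is not identically zero on (0, π/4). Define H(θ) := (1/4) ∫₀^{π/4} ( |sin(2θ − 2θ')| − |sin(2θ + 2θ')| ) h(θ') dθ'. Then for every θ ∈ (0, π/4), one has H(θ) < 0 and h(θ) − 4 H(θ) > 0. -/
import Mathlib

open Real Set MeasureTheory intervalIntegral

noncomputable section

/-- The stream-function coefficient of the 1D model for radially homogeneous 2D Euler,
for 4-fold symmetric odd data `h`:
`H(θ) = (1/4) ∫₀^{π/4} (|sin(2θ − 2θ')| − |sin(2θ + 2θ')|) h(θ') dθ'`. -/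
def streamH (h : ℝ → ℝ) (θ : ℝ) : ℝ :=
  1 / 4 * ∫ θ' in (0 : ℝ)..(Real.pi / 4),
    (|Real.sin (2 * θ - 2 * θ')| - |Real.sin (2 * θ + 2 * θ')|) * h θ'

lemma kernel_le {a b : ℝ} (ha : a ∈ Ioo 0 (Real.pi / 2)) (hb : b ∈ Icc 0 (Real.pi / 2)) :
    |Real.sin (a - b)| ≤ |Real.sin (a + b)| := by
  have hsa : 0 ≤ Real.sin a := Real.sin_nonneg_of_nonneg_of_le_pi ha.1.le
    (ha.2.le.trans (by linarith [Real.pi_pos]))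
  have hca : 0 ≤ Real.cos a := Real.cos_nonneg_of_mem_Icc ⟨by linarith [ha.1, Real.pi_pos], ha.2.le⟩
  have hsb : 0 ≤ Real.sin b := Real.sin_nonneg_of_nonneg_of_le_pi hb.1
    (hb.2.trans (by linarith [Real.pi_pos]))
  have hcb : 0 ≤ Real.cos b := Real.cos_nonneg_of_mem_Icc ⟨by linarith [hb.1, Real.pi_pos], hb.2⟩
  have habs : |Real.sin (a + b)| = Real.sin (a + b) := abs_of_nonneg <| by
    have := Real.sin_nonneg_of_nonneg_of_le_pi (by linarith [ha.1, hb.1] : (0:ℝ) ≤ a + b)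
      (by linarith [ha.2, hb.2] : a + b ≤ Real.pi)
    exact this
  rw [habs, Real.sin_add, Real.sin_sub]
  have h1 : 0 ≤ Real.sin a * Real.cos b := mul_nonneg hsa hcb
  have h2 : 0 ≤ Real.cos a * Real.sin b := mul_nonneg hca hsb
  rw [abs_sub_le_iff]
  constructor <;> linarith

lemma kernel_lt {a b : ℝ} (ha : a ∈ Ioo 0 (Real.pi / 2)) (hb : b ∈ Ioo 0 (Real.pi / 2)) :
    |Real.sin (a - b)| < |Real.sin (a + b)| := by
  have hsa : 0 < Real.sin a := Real.sin_pos_of_pos_of_lt_pi ha.1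
    (ha.2.trans (by linarith [Real.pi_pos]))
  have hca : 0 < Real.cos a := Real.cos_pos_of_mem_Ioo ⟨by linarith [ha.1, Real.pi_pos], ha.2⟩
  have hsb : 0 < Real.sin b := Real.sin_pos_of_pos_of_lt_pi hb.1
    (hb.2.trans (by linarith [Real.pi_pos]))
  have hcb : 0 < Real.cos b := Real.cos_pos_of_mem_Ioo ⟨by linarith [hb.1, Real.pi_pos], hb.2⟩
  have habs : |Real.sin (a + b)| = Real.sin (a + b) := abs_of_nonneg <|
    Real.sin_nonneg_of_nonneg_of_le_pi (by linarith [ha.1, hb.1]) (by linarith [ha.2, hb.2])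
  rw [habs, Real.sin_add, Real.sin_sub]
  have h1 : 0 < Real.sin a * Real.cos b := mul_pos hsa hcb
  have h2 : 0 < Real.cos a * Real.sin b := mul_pos hca hsb
  rw [abs_sub_lt_iff]
  constructor <;> linarith

/-- Sign of the stream function for odd nonnegative data: if `h ≥ 0` on `[0, π/4]` is
continuous and not identically zero on `(0, π/4)`, then `H < 0` and `h − 4H > 0`
on `(0, π/4)`. -/
theorem streamH_negative (h : ℝ → ℝ)
    (hcont : ContinuousOn h (Icc 0 (Real.pi / 4)))
    (hnonneg : ∀ θ ∈ Icc (0 : ℝ) (Real.pi / 4), 0 ≤ h θ)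
    (hne : ∃ θ ∈ Ioo (0 : ℝ) (Real.pi / 4), h θ ≠ 0) :
    ∀ θ ∈ Ioo (0 : ℝ) (Real.pi / 4), streamH h θ < 0 ∧ 0 < h θ - 4 * streamH h θ := by
  have hpi : 0 < Real.pi / 4 := by positivity
  intro θ hθ
  obtain ⟨θ₀, hθ₀, hθ₀ne⟩ := hne
  set f : ℝ → ℝ := fun θ' =>
    -((|Real.sin (2 * θ - 2 * θ')| - |Real.sin (2 * θ + 2 * θ')|) * h θ') with hf
  have hfc : ContinuousOn f (Icc 0 (Real.pi / 4)) := by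
    apply ContinuousOn.neg
    exact (((Real.continuous_sin.comp (by continuity)).abs.sub
      (Real.continuous_sin.comp (by continuity)).abs).continuousOn).mul hcont
  have ha : 2 * θ ∈ Ioo 0 (Real.pi / 2) := ⟨by linarith [hθ.1], by linarith [hθ.2]⟩
  have hfnonneg : ∀ x ∈ Ioc (0:ℝ) (Real.pi / 4), 0 ≤ f x := by
    intro x hx
    have hb : 2 * x ∈ Icc 0 (Real.pi / 2) := ⟨by linarith [hx.1], by linarith [hx.2]⟩
    have := kernel_le ha hb
    have hhx := hnonneg x ⟨hx.1.le, hx.2⟩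
    simp only [hf]
    nlinarith
  have hfpos : ∃ c ∈ Icc (0:ℝ) (Real.pi / 4), 0 < f c := by
    refine ⟨θ₀, ⟨hθ₀.1.le, hθ₀.2.le⟩, ?_⟩
    have hb : 2 * θ₀ ∈ Ioo 0 (Real.pi / 2) := ⟨by linarith [hθ₀.1], by linarith [hθ₀.2]⟩
    have hk := kernel_lt ha hb
    have hh : 0 < h θ₀ := lt_of_le_of_ne (hnonneg θ₀ ⟨hθ₀.1.le, hθ₀.2.le⟩) (Ne.symm hθ₀ne)
    simp only [hf]
    nlinarith
  have hint : 0 < ∫ x in (0:ℝ)..(Real.pi / 4), f x :=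
    intervalIntegral.integral_pos hpi hfc hfnonneg hfpos
  have hneg : streamH h θ < 0 := by
    have : (∫ θ' in (0:ℝ)..(Real.pi / 4),
        (|Real.sin (2 * θ - 2 * θ')| - |Real.sin (2 * θ + 2 * θ')|) * h θ')
        = -∫ x in (0:ℝ)..(Real.pi / 4), f x := by
      rw [← intervalIntegral.integral_neg]
      simp [hf]
    rw [streamH, this]
    linarith
  refine ⟨hneg, ?_⟩
  have := hnonneg θ ⟨hθ.1.le, hθ.2.le⟩
  linarith
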